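/- arXiv:2412.05814 — 3 statements merged into one kernel-verified Lean document; each statement's English description precedes it below -/
import Mathlib

section
/- Let E be a sandpile graph. The map ς_E : Idem(SP(E)) → 𝓗_E sending the idempotent 0 to S_E and each nonzero idempotent x to the hereditary saturated closure of the support of any element of the free commutative monoid on E⁰ representing x, is well defined (independent of the chosen representative) and is an order isomorphism from (Idem(SP(E)), ≤) to (𝓗_E, ⊆), where ≤ is the canonical preorder of SP(E) restricted to idempotents. -/
/-! ### Generic commutative monoid notions -/

/-- The canonical preorder on a commutative monoid: `x ≤ y` iff `y = x + z` for some `z`. -/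
def cle {M : Type} [AddCommMonoid M] (x y : M) : Prop := ∃ z, y = x + z

/-- The archimedean equivalence relation on a commutative monoid. -/
def archRel {M : Type} [AddCommMonoid M] (x y : M) : Prop :=
  (∃ m : ℕ, cle x (m • y)) ∧ (∃ n : ℕ, cle y (n • x))

/-- An element `a` is recurrent if it is accessible from every element. -/
def Recurrent {M : Type} [AddCommMonoid M] (a : M) : Prop := ∀ c, ∃ z, a = c + z

/-- An order-ideal of a commutative monoid: a submonoid `I` with `x + y ∈ I → x ∈ I ∧ y ∈ I`. -/
def IsOrderIdeal {M : Type} [AddCommMonoid M] (I : Set M) : Prop :=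
  0 ∈ I ∧ (∀ x ∈ I, ∀ y ∈ I, x + y ∈ I) ∧ ∀ x y : M, x + y ∈ I → x ∈ I ∧ y ∈ I

/-- A subsemigroup which is a group under the induced addition. -/
def IsSubgroupSet {M : Type} [AddCommMonoid M] (S : Set M) : Prop :=
  S.Nonempty ∧ (∀ x ∈ S, ∀ y ∈ S, x + y ∈ S) ∧
    ∃ e ∈ S, (∀ x ∈ S, e + x = x) ∧ ∀ x ∈ S, ∃ y ∈ S, x + y = e

/-- A maximal subgroup of a commutative monoid. -/
def IsMaximalSubgroup {M : Type} [AddCommMonoid M] (S : Set M) : Prop :=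
  IsSubgroupSet S ∧ ∀ T : Set M, IsSubgroupSet T → S ⊆ T → S = T

/-- The defining setoid of the Grothendieck group of a commutative monoid. -/
def grSetoid (M : Type) [AddCommMonoid M] : Setoid (M × M) where
  r p q := ∃ z, p.1 + q.2 + z = p.2 + q.1 + z
  iseqv := by
    constructor
    · exact fun p => ⟨0, by abel⟩
    · intro p q h
      obtain ⟨z, hz⟩ := h
      exact ⟨z, by
        calc q.1 + p.2 + z = p.2 + q.1 + z := by abel
          _ = p.1 + q.2 + z := hz.symm
          _ = q.2 + p.1 + z := by abel⟩
    · intro p q r h h'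
      obtain ⟨z₁, h₁⟩ := h
      obtain ⟨z₂, h₂⟩ := h'
      refine ⟨q.1 + q.2 + z₁ + z₂, ?_⟩
      have h : (p.1 + q.2 + z₁) + (q.1 + r.2 + z₂) = (p.2 + q.1 + z₁) + (q.2 + r.1 + z₂) := by
        rw [h₁, h₂]
      calc p.1 + r.2 + (q.1 + q.2 + z₁ + z₂)
          = (p.1 + q.2 + z₁) + (q.1 + r.2 + z₂) := by abel
        _ = (p.2 + q.1 + z₁) + (q.2 + r.1 + z₂) := h
        _ = p.2 + r.1 + (q.1 + q.2 + z₁ + z₂) := by abel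

/-- The Grothendieck group of a commutative monoid, as a quotient of `M × M`. -/
def GrGroup (M : Type) [AddCommMonoid M] : Type := Quotient (grSetoid M)

/-- Addition on the Grothendieck group. -/
def GrGroup.add {M : Type} [AddCommMonoid M] (p q : GrGroup M) : GrGroup M :=
  Quotient.map₂
    (fun p q => (p.1 + q.1, p.2 + q.2))
    (by
      intro p p' hp q q' hq
      obtain ⟨z₁, h₁⟩ := hp
      obtain ⟨z₂, h₂⟩ := hq
      refine ⟨z₁ + z₂, ?_⟩
      have h : (p.1 + p'.2 + z₁) + (q.1 + q'.2 + z₂)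
          = (p.2 + p'.1 + z₁) + (q.2 + q'.1 + z₂) := by rw [h₁, h₂]
      calc p.1 + q.1 + (p'.2 + q'.2) + (z₁ + z₂)
          = (p.1 + p'.2 + z₁) + (q.1 + q'.2 + z₂) := by abel
        _ = (p.2 + p'.1 + z₁) + (q.2 + q'.1 + z₂) := h
        _ = p.2 + q.2 + (p'.1 + q'.1) + (z₁ + z₂) := by abel)
    p q

instance {M : Type} [AddCommMonoid M] : Add (GrGroup M) := ⟨GrGroup.add⟩

/-- The defining setoid of the Grothendieck group of a (nonempty, additively closed)
subsemigroup `S` of a commutative monoid. -/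
def grSubSetoid {M : Type} [AddCommMonoid M] (S : Set M) (x₀ : M) (hx₀ : x₀ ∈ S)
    (hcl : ∀ a ∈ S, ∀ b ∈ S, a + b ∈ S) : Setoid (S × S) where
  r p q := ∃ z ∈ S, p.1.1 + q.2.1 + z = p.2.1 + q.1.1 + z
  iseqv := by
    constructor
    · exact fun p => ⟨x₀, hx₀, by abel⟩
    · intro p q h
      obtain ⟨z, hzS, hz⟩ := h
      exact ⟨z, hzS, by
        calc q.1.1 + p.2.1 + z = p.2.1 + q.1.1 + z := by abel
          _ = p.1.1 + q.2.1 + z := hz.symm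
          _ = q.2.1 + p.1.1 + z := by abel⟩
    · intro p q r h h'
      obtain ⟨z₁, hz₁S, h₁⟩ := h
      obtain ⟨z₂, hz₂S, h₂⟩ := h'
      refine ⟨q.1.1 + q.2.1 + z₁ + z₂,
        hcl _ (hcl _ (hcl _ q.1.2 _ q.2.2) _ hz₁S) _ hz₂S, ?_⟩
      have h : (p.1.1 + q.2.1 + z₁) + (q.1.1 + r.2.1 + z₂)
          = (p.2.1 + q.1.1 + z₁) + (q.2.1 + r.1.1 + z₂) := by rw [h₁, h₂]
      calc p.1.1 + r.2.1 + (q.1.1 + q.2.1 + z₁ + z₂)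
          = (p.1.1 + q.2.1 + z₁) + (q.1.1 + r.2.1 + z₂) := by abel
        _ = (p.2.1 + q.1.1 + z₁) + (q.2.1 + r.1.1 + z₂) := h
        _ = p.2.1 + r.1.1 + (q.1.1 + q.2.1 + z₁ + z₂) := by abel

/-- Addition on the Grothendieck group of a subsemigroup. -/
def grSubAdd {M : Type} [AddCommMonoid M] {S : Set M} {x₀ : M} {hx₀ : x₀ ∈ S}
    {hcl : ∀ a ∈ S, ∀ b ∈ S, a + b ∈ S}
    (p q : Quotient (grSubSetoid S x₀ hx₀ hcl)) : Quotient (grSubSetoid S x₀ hx₀ hcl) :=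
  Quotient.map₂
    (fun p q => (⟨p.1.1 + q.1.1, hcl _ p.1.2 _ q.1.2⟩, ⟨p.2.1 + q.2.1, hcl _ p.2.2 _ q.2.2⟩))
    (by
      intro p p' hp q q' hq
      obtain ⟨z₁, hz₁S, h₁⟩ := hp
      obtain ⟨z₂, hz₂S, h₂⟩ := hq
      refine ⟨z₁ + z₂, hcl _ hz₁S _ hz₂S, ?_⟩
      have h : (p.1.1 + p'.2.1 + z₁) + (q.1.1 + q'.2.1 + z₂)
          = (p.2.1 + p'.1.1 + z₁) + (q.2.1 + q'.1.1 + z₂) := by rw [h₁, h₂]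
      calc p.1.1 + q.1.1 + (p'.2.1 + q'.2.1) + (z₁ + z₂)
          = (p.1.1 + p'.2.1 + z₁) + (q.1.1 + q'.2.1 + z₂) := by abel
        _ = (p.2.1 + p'.1.1 + z₁) + (q.2.1 + q'.1.1 + z₂) := h
        _ = p.2.1 + q.2.1 + (p'.1.1 + q'.1.1) + (z₁ + z₂) := by abel)
    p q

/-! ### Finite directed graphs and sandpile monoids -/

/-- A finite directed graph. -/
structure DGraph where
  V : Type
  E : Type
  [fintV : Fintype V]
  [fintE : Fintype E]
  [decV : DecidableEq V]
  [decE : DecidableEq E]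
  src : E → V
  rng : E → V

attribute [instance] DGraph.fintV DGraph.fintE DGraph.decV DGraph.decE

namespace DGraph

variable (G : DGraph)

/-- A vertex is a sink if it emits no edges. -/
def IsSink (v : G.V) : Prop := ∀ e : G.E, G.src e ≠ v

/-- One-step reachability along an edge. -/
def Step (u v : G.V) : Prop := ∃ e : G.E, G.src e = u ∧ G.rng e = v

/-- There is a (possibly empty) path from `u` to `v`. -/
def Reaches (u v : G.V) : Prop := Relation.ReflTransGen G.Step u v

/-- A vertex lies on a cycle iff there is a nontrivial closed path based at it. -/
def OnCycle (v : G.V) : Prop := Relation.TransGen G.Step v v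

/-- A sandpile graph: `s` is the unique sink and every vertex reaches `s`. -/
def IsSandpile (s : G.V) : Prop :=
  G.IsSink s ∧ (∀ v : G.V, G.IsSink v → v = s) ∧ ∀ v : G.V, G.Reaches v s

/-- The set of edges emitted by `v`. -/
def outEdges (v : G.V) : Finset G.E := Finset.univ.filter fun e => G.src e = v

/-- A hereditary subset of vertices. -/
def Hereditary (H : Finset G.V) : Prop := ∀ e : G.E, G.src e ∈ H → G.rng e ∈ H

/-- A saturated subset of vertices. -/
def Saturated (H : Finset G.V) : Prop :=
  ∀ v : G.V, ¬ G.IsSink v → (∀ e : G.E, G.src e = v → G.rng e ∈ H) → v ∈ H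

/-- The restriction graph `E_H` of a hereditary subset `H`. -/
def restrict (H : Finset G.V) (hher : G.Hereditary H) : DGraph where
  V := {v : G.V // v ∈ H}
  E := {e : G.E // G.src e ∈ H}
  src e := ⟨G.src e.1, e.2⟩
  rng e := ⟨G.rng e.1, hher e.1 e.2⟩

/-- The defining relations of the sandpile monoid: `s = 0` and, for each non-sink
vertex `v`, `|s⁻¹(v)|·v = Σ_{e ∈ s⁻¹(v)} r(e)`. -/
def spRel (s : G.V) : Multiset G.V → Multiset G.V → Prop := fun a b =>
  (a = {s} ∧ b = 0) ∨
    ∃ v : G.V, ¬ G.IsSink v ∧ a = Multiset.replicate (G.outEdges v).card v ∧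
      b = (G.outEdges v).val.map G.rng

/-- The congruence on the free commutative monoid `Multiset G.V` generated by the
sandpile relations. -/
def spCon (s : G.V) : AddCon (Multiset G.V) := addConGen (G.spRel s)

/-- The sandpile monoid `SP(E)`. -/
abbrev SP (s : G.V) : Type := (G.spCon s).Quotient

/-- The class in `SP(E)` of an element of the free commutative monoid on the vertices. -/
def spMk (s : G.V) (a : Multiset G.V) : G.SP s := (G.spCon s).mk' a

/-- The one-step toppling/reduction relation `→₁` on the free commutative monoid. -/
def step1 (s : G.V) : Multiset G.V → Multiset G.V → Prop := fun a b =>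
  (s ∈ a ∧ b = a.filter fun v => v ≠ s) ∨
    ∃ v : G.V, ¬ G.IsSink v ∧ (G.outEdges v).card ≤ a.count v ∧
      b = (a - Multiset.replicate (G.outEdges v).card v) + (G.outEdges v).val.map G.rng

/-- The reflexive transitive closure `→` of `→₁`. -/
def Transforms (s : G.V) : Multiset G.V → Multiset G.V → Prop :=
  Relation.ReflTransGen (G.step1 s)

/-- The image in `SP(E)` of the canonical embedding of `SP(E_H)`: classes of multisets
supported in `H`. -/
def spImage (s : G.V) (H : Finset G.V) : Set (G.SP s) :=
  Set.range fun a : Multiset {v : G.V // v ∈ H} => G.spMk s (a.map Subtype.val)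

open Classical in
/-- The set `S_E` of vertices from which no cycle is reachable. -/
noncomputable def sinkSet : Finset G.V :=
  Finset.univ.filter fun v => ¬ ∃ u, G.Reaches v u ∧ G.OnCycle u

/-- Mutual reachability. -/
def MutReach (u v : G.V) : Prop := G.Reaches u v ∧ G.Reaches v u

open Classical in
/-- The strongly connected component of a vertex. -/
noncomputable def scc (v : G.V) : Finset G.V := Finset.univ.filter fun u => G.MutReach v u

/-- The set `𝓒_E` of (vertex sets of) strongly connected cyclic components. -/
def cyclicComps : Set (Finset G.V) := {C | ∃ v : G.V, G.OnCycle v ∧ C = G.scc v}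

/-- The order on components: `C ≤ C'` iff there is a path from a vertex of `C` to a
vertex of `C'`. -/
def compLe (C C' : Finset G.V) : Prop := ∃ u ∈ C, ∃ w ∈ C', G.Reaches u w

/-- A filter of the poset `𝓒_E`. -/
def IsFilter (F : Set (Finset G.V)) : Prop :=
  F ⊆ G.cyclicComps ∧ ∀ C ∈ F, ∀ C' ∈ G.cyclicComps, G.compLe C C' → C' ∈ F

open Classical in
/-- The hereditary saturated closure of a set of vertices: the intersection (hence the
smallest) of all saturated hereditary subsets containing it. -/
noncomputable def hsClosure (X : Finset G.V) : Finset G.V :=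
  Finset.univ.filter fun v =>
    ∀ H : Finset G.V, G.Hereditary H → G.Saturated H → X ⊆ H → v ∈ H

open Classical in
/-- The union of a collection of components, as a finset of vertices. -/
noncomputable def compUnion (F : Set (Finset G.V)) : Finset G.V :=
  Finset.univ.filter fun v => ∃ C ∈ F, v ∈ C

/-- The poset `𝓗^s_E = {S_E} ∪ {H_C : C ∈ 𝓒_E}`. -/
def HsE : Set (Finset G.V) :=
  insert G.sinkSet {H | ∃ C ∈ G.cyclicComps, H = G.hsClosure C}

/-- An ideal of the poset `𝓗^s_E`. -/
def IsHsIdeal (I : Set (Finset G.V)) : Prop :=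
  I.Nonempty ∧ I ⊆ G.HsE ∧ ∀ x ∈ I, ∀ y ∈ G.HsE, y ⊆ x → y ∈ I

lemma hsClosure_hereditary (X : Finset G.V) : G.Hereditary (G.hsClosure X) := by
  classical
  intro e he
  simp only [hsClosure, Finset.mem_filter, Finset.mem_univ, true_and] at he ⊢
  have he' := he
  exact fun H hher hsat hX => hher e (he' H hher hsat hX)

end DGraph
namespace DGraph
variable (G : DGraph)

lemma mem_hsClosure {X : Finset G.V} {v : G.V} :
    v ∈ G.hsClosure X ↔ ∀ H : Finset G.V, G.Hereditary H → G.Saturated H → X ⊆ H → v ∈ H := by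
  classical
  simp [hsClosure]

lemma subset_hsClosure (X : Finset G.V) : X ⊆ G.hsClosure X := by
  intro v hv
  exact (G.mem_hsClosure).2 fun H _ _ hX => hX hv

lemma hsClosure_min {X H : Finset G.V} (hher : G.Hereditary H) (hsat : G.Saturated H)
    (hX : X ⊆ H) : G.hsClosure X ⊆ H := by
  intro v hv
  exact (G.mem_hsClosure).1 hv H hher hsat hX

lemma hsClosure_saturated (X : Finset G.V) : G.Saturated (G.hsClosure X) := by
  intro v hv hnb
  refine (G.mem_hsClosure).2 fun H hher hsat hX => ?_
  exact hsat v hv fun e he => (G.mem_hsClosure).1 (hnb e he) H hher hsat hX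

lemma hsClosure_mono {X Y : Finset G.V} (h : X ⊆ Y) : G.hsClosure X ⊆ G.hsClosure Y :=
  G.hsClosure_min (G.hsClosure_hereditary Y) (G.hsClosure_saturated Y)
    (h.trans (G.subset_hsClosure Y))

lemma hsClosure_of_sathered {H : Finset G.V} (hher : G.Hereditary H) (hsat : G.Saturated H) :
    G.hsClosure H = H :=
  le_antisymm (G.hsClosure_min hher hsat subset_rfl) (G.subset_hsClosure H)

lemma mem_of_reaches {H : Finset G.V} (hher : G.Hereditary H) {v w : G.V}
    (hv : v ∈ H) (h : G.Reaches v w) : w ∈ H := by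
  induction h with
  | refl => exact hv
  | tail _ hstep ih =>
      obtain ⟨e, he1, he2⟩ := hstep
      exact he2 ▸ hher e (he1 ▸ ih)

end DGraph

namespace DGraph
variable (G : DGraph) (s : G.V)

lemma sink_mem_of_sathered (hG : G.IsSandpile s) {H : Finset G.V} (hne : H.Nonempty)
    (hher : G.Hereditary H) : s ∈ H := by
  obtain ⟨v, hv⟩ := hne
  exact G.mem_of_reaches hher hv (hG.2.2 v)

lemma mem_sinkSet_iff {v : G.V} : v ∈ G.sinkSet ↔ ¬ ∃ u, G.Reaches v u ∧ G.OnCycle u := by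
  classical
  simp [sinkSet]

lemma sink_mem_sinkSet (hG : G.IsSandpile s) : s ∈ G.sinkSet := by
  rw [G.mem_sinkSet_iff]
  rintro ⟨u, hru, hcyc⟩
  have hu : u = s := by
    rcases (Relation.ReflTransGen.cases_head hru) with h | ⟨c, ⟨e, he, -⟩, -⟩
    · exact h.symm
    · exact absurd he (hG.1 e)
  subst hu
  obtain ⟨b, ⟨e, he, -⟩, -⟩ := Relation.TransGen.head'_iff.1 hcyc
  exact hG.1 e he

lemma sinkSet_hereditary : G.Hereditary G.sinkSet := by
  intro e he
  rw [G.mem_sinkSet_iff] at he ⊢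
  rintro ⟨u, hru, hcyc⟩
  exact he ⟨u, Relation.ReflTransGen.head ⟨e, rfl, rfl⟩ hru, hcyc⟩

lemma sinkSet_saturated : G.Saturated G.sinkSet := by
  intro v hv hnb
  rw [G.mem_sinkSet_iff]
  rintro ⟨u, hru, hcyc⟩
  rcases Relation.ReflTransGen.cases_head hru with h | ⟨c, hstep, hcu⟩
  · subst h
    obtain ⟨w, ⟨e, he, hw⟩, hwv⟩ := Relation.TransGen.head'_iff.1 hcyc
    have hwS := hnb e he
    rw [G.mem_sinkSet_iff] at hwS
    exact hwS ⟨v, hw ▸ hwv, hcyc⟩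
  · obtain ⟨e, he, hc⟩ := hstep
    have hcS := hnb e he
    rw [G.mem_sinkSet_iff] at hcS
    exact hcS ⟨u, hc ▸ hcu, hcyc⟩

open Classical in
noncomputable def reachSet (v : G.V) : Finset G.V := Finset.univ.filter fun u => G.Reaches v u

lemma sinkSet_subset_aux (hG : G.IsSandpile s) {H : Finset G.V} (hher : G.Hereditary H)
    (hsat : G.Saturated H) (hs : s ∈ H) :
    ∀ n : ℕ, ∀ v : G.V, v ∈ G.sinkSet → (G.reachSet v).card ≤ n → v ∈ H := by
  classical
  intro n
  induction n with
  | zero =>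
      intro v _ hcard
      exfalso
      have : v ∈ G.reachSet v := by
        simp only [reachSet, Finset.mem_filter, Finset.mem_univ, true_and]
        exact Relation.ReflTransGen.refl
      have := Finset.card_pos.2 ⟨v, this⟩
      omega
  | succ n ih =>
      intro v hv hcard
      by_cases hvs : v = s
      · exact hvs ▸ hs
      · have hnsink : ¬ G.IsSink v := fun h => hvs (hG.2.1 v h)
        refine hsat v hnsink fun e he => ?_
        set w := G.rng e with hw
        have hwS : w ∈ G.sinkSet := G.sinkSet_hereditary e (he ▸ hv)
        have hsub : G.reachSet w ⊆ G.reachSet v := by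
          intro u hu
          simp only [reachSet, Finset.mem_filter, Finset.mem_univ, true_and] at hu ⊢
          exact Relation.ReflTransGen.head ⟨e, he, rfl⟩ hu
        have hvnot : v ∉ G.reachSet w := by
          simp only [reachSet, Finset.mem_filter, Finset.mem_univ, true_and]
          intro hwv
          rw [G.mem_sinkSet_iff] at hv
          exact hv ⟨v, Relation.ReflTransGen.refl,
            Relation.TransGen.head'_iff.2 ⟨w, ⟨e, he, rfl⟩, hwv⟩⟩
        have hlt : (G.reachSet w).card < (G.reachSet v).card :=
          Finset.card_lt_card ⟨hsub, fun hss => hvnot (hss (by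
            simp only [reachSet, Finset.mem_filter, Finset.mem_univ, true_and]
            exact Relation.ReflTransGen.refl))⟩
        exact ih w hwS (by omega)

lemma hsClosure_singleton_sink (hG : G.IsSandpile s) : G.hsClosure {s} = G.sinkSet := by
  apply le_antisymm
  · exact G.hsClosure_min G.sinkSet_hereditary G.sinkSet_saturated
      (Finset.singleton_subset_iff.2 (G.sink_mem_sinkSet s hG))
  · intro v hv
    exact (G.mem_hsClosure).2 fun H hher hsat hsH =>
      G.sinkSet_subset_aux s hG hher hsat (hsH (Finset.mem_singleton_self s))
        (G.reachSet v).card v hv le_rfl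

/-! ### spMk basics -/

lemma spMk_add (a b : Multiset G.V) : G.spMk s (a + b) = G.spMk s a + G.spMk s b :=
  map_add _ _ _

lemma spMk_zero : G.spMk s 0 = 0 := map_zero _

lemma spMk_of_rel {a b : Multiset G.V} (h : G.spRel s a b) : G.spMk s a = G.spMk s b := by
  apply (AddCon.eq _).2
  exact AddConGen.Rel.of a b h

lemma spMk_sink : G.spMk s {s} = 0 := by
  rw [← G.spMk_zero s]
  exact G.spMk_of_rel s (Or.inl ⟨rfl, rfl⟩)

lemma spMk_topple {v : G.V} (hv : ¬ G.IsSink v) :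
    G.spMk s (Multiset.replicate (G.outEdges v).card v) =
      G.spMk s ((G.outEdges v).val.map G.rng) :=
  G.spMk_of_rel s (Or.inr ⟨v, hv, rfl, rfl⟩)

lemma spMk_nsmul (n : ℕ) (a : Multiset G.V) : G.spMk s (n • a) = n • G.spMk s a := by
  induction n with
  | zero => simpa using G.spMk_zero s
  | succ n ih => rw [succ_nsmul, succ_nsmul, ← ih, ← G.spMk_add]

lemma spMk_replicate (n : ℕ) (v : G.V) :
    G.spMk s (Multiset.replicate n v) = n • G.spMk s {v} := by
  rw [← G.spMk_nsmul]
  congr 1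
  induction n with
  | zero => rfl
  | succ n ih => rw [Multiset.replicate_succ, succ_nsmul, ih, add_comm, Multiset.singleton_add]

lemma spMk_surjective : Function.Surjective (G.spMk s) := AddCon.mk'_surjective

/-! ### The closure of a representative -/

/-- Closure of the support together with the sink. -/
noncomputable def clm (a : Multiset G.V) : Finset G.V := G.hsClosure (insert s a.toFinset)

lemma sink_mem_clm (a : Multiset G.V) : s ∈ G.clm s a :=
  G.subset_hsClosure _ (Finset.mem_insert_self s _)

lemma toFinset_subset_clm (a : Multiset G.V) : a.toFinset ⊆ G.clm s a :=
  (Finset.subset_insert _ _).trans (G.subset_hsClosure _)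

lemma clm_add (a b : Multiset G.V) :
    G.clm s (a + b) = G.hsClosure (G.clm s a ∪ G.clm s b) := by
  apply le_antisymm
  · apply G.hsClosure_min (G.hsClosure_hereditary _) (G.hsClosure_saturated _)
    intro v hv
    apply G.subset_hsClosure
    rcases Finset.mem_insert.1 hv with h | h
    · exact Finset.mem_union_left _ (h ▸ G.sink_mem_clm s a)
    · rw [Multiset.toFinset_add, Finset.mem_union] at h
      rcases h with h | h
      · exact Finset.mem_union_left _ (G.toFinset_subset_clm s a h)
      · exact Finset.mem_union_right _ (G.toFinset_subset_clm s b h)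
  · apply G.hsClosure_min (G.hsClosure_hereditary _) (G.hsClosure_saturated _)
    intro v hv
    rcases Finset.mem_union.1 hv with h | h
    · exact G.hsClosure_mono (by
        intro u hu
        rcases Finset.mem_insert.1 hu with h' | h'
        · rw [h']; exact Finset.mem_insert_self s _
        · exact Finset.mem_insert_of_mem (by rw [Multiset.toFinset_add]; exact Finset.mem_union_left _ h')) h
    · exact G.hsClosure_mono (by
        intro u hu
        rcases Finset.mem_insert.1 hu with h' | h'
        · rw [h']; exact Finset.mem_insert_self s _
        · exact Finset.mem_insert_of_mem (by rw [Multiset.toFinset_add]; exact Finset.mem_union_right _ h')) h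

/-- The congruence "same closure". -/
noncomputable def clCon : AddCon (Multiset G.V) where
  r a b := G.clm s a = G.clm s b
  iseqv := ⟨fun _ => rfl, Eq.symm, Eq.trans⟩
  add' := by
    intro w x y z h1 h2
    show G.clm s (w + y) = G.clm s (x + z)
    rw [G.clm_add, G.clm_add, h1, h2]

lemma spRel_clm {a b : Multiset G.V} (h : G.spRel s a b) : G.clm s a = G.clm s b := by
  rcases h with ⟨ha, hb⟩ | ⟨v, hv, ha, hb⟩
  · subst ha; subst hb
    simp [clm]
  · subst ha; subst hb
    have hd : (G.outEdges v).card ≠ 0 := by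
      obtain ⟨e, he⟩ := not_forall.1 hv
      rw [not_not] at he
      exact Finset.card_ne_zero_of_mem (a := e) (by simp [outEdges, he])
    unfold clm
    apply le_antisymm
    · apply G.hsClosure_min (G.hsClosure_hereditary _) (G.hsClosure_saturated _)
      intro u hu
      rcases Finset.mem_insert.1 hu with h' | h'
      · rw [h']; exact G.subset_hsClosure _ (Finset.mem_insert_self s _)
      · rw [Multiset.toFinset_replicate, if_neg hd, Finset.mem_singleton] at h'
        subst h'
        refine (G.mem_hsClosure).2 fun H hher hsat hX => ?_
        refine hsat u hv fun e he => ?_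
        refine hX (Finset.mem_insert_of_mem ?_)
        rw [Multiset.mem_toFinset]
        exact Multiset.mem_map_of_mem G.rng (show e ∈ (G.outEdges u).val by simp [outEdges, he])
    · apply G.hsClosure_min (G.hsClosure_hereditary _) (G.hsClosure_saturated _)
      intro u hu
      rcases Finset.mem_insert.1 hu with h' | h'
      · rw [h']; exact G.subset_hsClosure _ (Finset.mem_insert_self s _)
      · rw [Multiset.mem_toFinset] at h'
        obtain ⟨e, he, rfl⟩ := Multiset.mem_map.1 h'
        have hsrc : G.src e = v := by
          have := Finset.mem_filter.1 (Finset.mem_def.2 he)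
          exact this.2
        apply G.hsClosure_hereditary
        rw [hsrc]
        apply G.subset_hsClosure
        apply Finset.mem_insert_of_mem
        rw [Multiset.toFinset_replicate, if_neg hd]
        exact Finset.mem_singleton_self v

lemma clm_of_spCon {a b : Multiset G.V} (h : G.spCon s a b) : G.clm s a = G.clm s b :=
  (AddCon.addConGen_le (c := G.clCon s)).2 (fun x y hxy => G.spRel_clm s hxy) h

/-- The closure map on the quotient. -/
noncomputable def clq : G.SP s → Finset G.V :=
  fun x => Quotient.liftOn x (G.clm s) fun _ _ h => G.clm_of_spCon s h

lemma clq_spMk (a : Multiset G.V) : G.clq s (G.spMk s a) = G.clm s a := rfl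

/-! ### cle basics -/

lemma cle_refl {M : Type} [AddCommMonoid M] (x : M) : cle x x := ⟨0, (add_zero x).symm⟩

lemma cle_trans {M : Type} [AddCommMonoid M] {x y z : M} (h1 : cle x y) (h2 : cle y z) :
    cle x z := by
  obtain ⟨a, ha⟩ := h1; obtain ⟨b, hb⟩ := h2
  exact ⟨a + b, by rw [hb, ha, add_assoc]⟩

lemma cle_add_right {M : Type} [AddCommMonoid M] (x z : M) : cle x (x + z) := ⟨z, rfl⟩

lemma cle_add_of_idem {M : Type} [AddCommMonoid M] {x y e : M} (he : e + e = e)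
    (h1 : cle x e) (h2 : cle y e) : cle (x + y) e := by
  obtain ⟨a, ha⟩ := h1; obtain ⟨b, hb⟩ := h2
  refine ⟨a + b, ?_⟩
  calc e = e + e := he.symm
    _ = (x + a) + (y + b) := by rw [← ha, ← hb]
    _ = x + y + (a + b) := by abel

lemma nsmul_idem {M : Type} [AddCommMonoid M] {e : M} (he : e + e = e) {n : ℕ} (hn : 1 ≤ n) :
    n • e = e := by
  induction n with
  | zero => omega
  | succ n ih =>
      rcases Nat.eq_or_lt_of_le hn with h | h
      · simp [← h]
      · rw [succ_nsmul, ih (by omega), he]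

lemma cle_nsmul {M : Type} [AddCommMonoid M] {x y : M} (h : cle x y) (n : ℕ) :
    cle (n • x) (n • y) := by
  obtain ⟨z, hz⟩ := h
  exact ⟨n • z, by rw [hz, smul_add]⟩

lemma idem_add_of_cle {M : Type} [AddCommMonoid M] {e f : M} (he : e + e = e)
    (h : cle e f) : e + f = f := by
  obtain ⟨z, hz⟩ := h
  rw [hz, ← add_assoc, he]

/-! ### the key absorption lemma -/

lemma cle_sum_of_forall {e : G.SP s} (he : e + e = e) (c : Multiset G.V)
    (h : ∀ v ∈ c, cle (G.spMk s {v}) e) : cle (G.spMk s c) e := by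
  induction c using Multiset.induction with
  | empty => rw [G.spMk_zero s]; exact ⟨e, (zero_add e).symm⟩
  | cons v c ih =>
      rw [show v ::ₘ c = {v} + c from (Multiset.singleton_add v c).symm, G.spMk_add]
      exact cle_add_of_idem he (h v (Multiset.mem_cons_self v c))
        (ih fun u hu => h u (Multiset.mem_cons_of_mem hu))

lemma cle_of_mem_clm {e : G.SP s} (he : e + e = e) {a : Multiset G.V} (ha : e = G.spMk s a)
    {v : G.V} (hv : v ∈ G.clm s a) : cle (G.spMk s {v}) e := by
  classical
  set T : Finset G.V := Finset.univ.filter (fun u => cle (G.spMk s {u}) e) with hT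
  have memT : ∀ u : G.V, u ∈ T ↔ cle (G.spMk s {u}) e := by
    intro u; simp [hT]
  have hher : G.Hereditary T := by
    intro ed hs'
    rw [memT] at hs' ⊢
    set u := G.src ed with hu
    have hns : ¬ G.IsSink u := by
      intro h; exact h ed rfl
    have hd : 1 ≤ (G.outEdges u).card :=
      Nat.one_le_iff_ne_zero.2 (Finset.card_ne_zero_of_mem (a := ed) (by simp [outEdges, hu]))
    have h1 : cle (G.spMk s {G.rng ed}) (G.spMk s ((G.outEdges u).val.map G.rng)) := by
      have hmem : G.rng ed ∈ (G.outEdges u).val.map G.rng :=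
        Multiset.mem_map_of_mem G.rng (by simp [outEdges, hu])
      rw [← Multiset.cons_erase hmem,
        show G.rng ed ::ₘ (((G.outEdges u).val.map G.rng).erase (G.rng ed)) =
          {G.rng ed} + (((G.outEdges u).val.map G.rng).erase (G.rng ed)) from
          (Multiset.singleton_add _ _).symm, G.spMk_add]
      exact cle_add_right _ _
    rw [← G.spMk_topple s hns, G.spMk_replicate] at h1
    refine cle_trans h1 ?_
    refine cle_trans (cle_nsmul hs' (G.outEdges u).card) ?_
    rw [nsmul_idem he hd]
    exact cle_refl e
  have hsat : G.Saturated T := by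
    intro u hns hnb
    rw [memT]
    have hd : 1 ≤ (G.outEdges u).card := by
      obtain ⟨ed, hed⟩ := not_forall.1 hns
      rw [not_not] at hed
      exact Nat.one_le_iff_ne_zero.2 (Finset.card_ne_zero_of_mem (a := ed) (by simp [outEdges, hed]))
    have h1 : cle (G.spMk s ((G.outEdges u).val.map G.rng)) e := by
      refine cle_sum_of_forall G s he _ fun w hw => ?_
      obtain ⟨ed, hed, rfl⟩ := Multiset.mem_map.1 hw
      have : G.src ed = u := (Finset.mem_filter.1 (Finset.mem_def.2 hed)).2
      rw [← memT]
      exact hnb ed this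
    rw [← G.spMk_topple s hns, G.spMk_replicate] at h1
    obtain ⟨k, hk⟩ := Nat.exists_eq_add_of_le hd
    rw [hk, add_nsmul, one_nsmul] at h1
    exact cle_trans (cle_add_right _ _) h1
  have hX : insert s a.toFinset ⊆ T := by
    intro u hu
    rw [memT]
    rcases Finset.mem_insert.1 hu with h' | h'
    · rw [h', G.spMk_sink s]
      exact ⟨e, (zero_add e).symm⟩
    · rw [Multiset.mem_toFinset] at h'
      rw [ha, ← Multiset.cons_erase h',
        show u ::ₘ (a.erase u) = {u} + a.erase u from (Multiset.singleton_add _ _).symm,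
        G.spMk_add]
      exact cle_add_right _ _
  have := G.hsClosure_min hher hsat hX hv
  exact (memT v).1 this

/-! ### distance to the sink -/

def reachN : ℕ → G.V → G.V → Prop
  | 0 => fun u v => u = v
  | n+1 => fun u v => ∃ w, G.Step u w ∧ reachN n w v

lemma reachN_tail {n : ℕ} {u w v : G.V} (h : G.reachN n u w) (hs : G.Step w v) :
    reachN G (n+1) u v := by
  induction n generalizing u with
  | zero => exact ⟨v, h ▸ hs, rfl⟩
  | succ n ih =>
      obtain ⟨w', hw', h'⟩ := h
      exact ⟨w', hw', ih h'⟩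

lemma reaches_reachN {u v : G.V} (h : G.Reaches u v) : ∃ n, G.reachN n u v := by
  induction h with
  | refl => exact ⟨0, rfl⟩
  | tail _ hstep ih =>
      obtain ⟨n, hn⟩ := ih
      exact ⟨n + 1, G.reachN_tail hn hstep⟩

open Classical in
/-- Distance to the sink. -/
noncomputable def distS (hG : G.IsSandpile s) (v : G.V) : ℕ :=
  Nat.find (G.reaches_reachN (hG.2.2 v))

lemma distS_sink (hG : G.IsSandpile s) : G.distS s hG s = 0 := by
  classical
  rw [distS, Nat.find_eq_zero]
  rfl

lemma distS_pos (hG : G.IsSandpile s) {v : G.V} (hv : v ≠ s) : 1 ≤ G.distS s hG v := by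
  classical
  rw [Nat.one_le_iff_ne_zero]
  intro h
  have h0 : G.reachN 0 v s := by
    have := Nat.find_spec (G.reaches_reachN (hG.2.2 v))
    rwa [show Nat.find (G.reaches_reachN (hG.2.2 v)) = 0 from h] at this
  exact hv h0

lemma distS_step (hG : G.IsSandpile s) {v : G.V} (hv : v ≠ s) :
    ∃ e : G.E, G.src e = v ∧ G.distS s hG (G.rng e) < G.distS s hG v := by
  classical
  have hpos := G.distS_pos s hG hv
  have hspec : G.reachN (G.distS s hG v) v s := Nat.find_spec (G.reaches_reachN (hG.2.2 v))
  obtain ⟨k, hk⟩ := Nat.exists_eq_add_of_le hpos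
  rw [hk] at hspec
  rw [show 1 + k = k + 1 from by omega] at hspec
  obtain ⟨w, ⟨e, he, hrng⟩, hw⟩ := hspec
  refine ⟨e, he, ?_⟩
  have : G.distS s hG (G.rng e) ≤ k := Nat.find_le (by rw [hrng]; exact hw)
  omega

/-! ### weights and termination -/

/-- Upper bound for distances. -/
noncomputable def distB (hG : G.IsSandpile s) : ℕ := Finset.univ.sup (G.distS s hG)

/-- `K`, a number bigger than every out-degree. -/
noncomputable def bigK : ℕ := (Finset.univ.sup fun v => (G.outEdges v).card) + 1

lemma outdeg_lt_bigK (v : G.V) : (G.outEdges v).card < G.bigK :=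
  Nat.lt_succ_of_le (Finset.le_sup (f := fun v => (G.outEdges v).card) (Finset.mem_univ v))

lemma distS_le_distB (hG : G.IsSandpile s) (v : G.V) : G.distS s hG v ≤ G.distB s hG :=
  Finset.le_sup (Finset.mem_univ v)

/-- The weight of a vertex. -/
noncomputable def wt (hG : G.IsSandpile s) (v : G.V) : ℕ :=
  G.bigK ^ (G.distB s hG + 1) - G.bigK ^ (G.distB s hG + 1 - G.distS s hG v)

/-- The weight of a configuration. -/
noncomputable def wtM (hG : G.IsSandpile s) (a : Multiset G.V) : ℕ := (a.map (G.wt s hG)).sum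

lemma wtM_add (hG : G.IsSandpile s) (a b : Multiset G.V) :
    G.wtM s hG (a + b) = G.wtM s hG a + G.wtM s hG b := by
  simp [wtM]

lemma wtM_replicate (hG : G.IsSandpile s) (n : ℕ) (v : G.V) :
    G.wtM s hG (Multiset.replicate n v) = n * G.wt s hG v := by
  simp [wtM, Multiset.map_replicate, Multiset.sum_replicate]

lemma one_le_bigK : 1 ≤ G.bigK := Nat.succ_le_succ (Nat.zero_le _)

lemma wt_le (hG : G.IsSandpile s) (v : G.V) :
    G.wt s hG v ≤ G.bigK ^ (G.distB s hG + 1) - G.bigK := by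
  unfold wt
  apply Nat.sub_le_sub_left
  calc G.bigK = G.bigK ^ 1 := (pow_one _).symm
    _ ≤ G.bigK ^ (G.distB s hG + 1 - G.distS s hG v) :=
      Nat.pow_le_pow_right (G.one_le_bigK) (by
        have := G.distS_le_distB s hG v; omega)

lemma wtM_topple_lt (hG : G.IsSandpile s) {v : G.V} (hv : ¬ G.IsSink v) :
    G.wtM s hG ((G.outEdges v).val.map G.rng) < (G.outEdges v).card * G.wt s hG v := by
  classical
  have hvs : v ≠ s := fun h => hv (h ▸ hG.1)
  obtain ⟨e₀, he₀, hlt₀⟩ := G.distS_step s hG hvs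
  set K := G.bigK with hK
  set B := G.distB s hG with hB
  set dv := G.distS s hG v with hdv
  set m := B + 1 - dv with hm
  have hdv1 : 1 ≤ dv := G.distS_pos s hG hvs
  have hdvB : dv ≤ B := G.distS_le_distB s hG v
  have hm1 : 1 ≤ m := by omega
  have hmB : m + 1 ≤ B + 1 := by omega
  have hKdeg : (G.outEdges v).card < K := G.outdeg_lt_bigK v
  have hdeg1 : 1 ≤ (G.outEdges v).card := by
    refine Nat.one_le_iff_ne_zero.2 (Finset.card_ne_zero_of_mem (a := e₀) ?_)
    simp [outEdges, he₀]
  -- the weight of the distinguished neighbour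
  have hwt₀ : G.wt s hG (G.rng e₀) ≤ K ^ (B + 1) - K ^ (m + 1) := by
    unfold wt
    apply Nat.sub_le_sub_left
    apply Nat.pow_le_pow_right (G.one_le_bigK)
    omega
  -- the multiset of images of the other edges
  have he₀mem : e₀ ∈ (G.outEdges v).val := by
    rw [Finset.mem_val]; simp [outEdges, he₀]
  have hsplit : (G.outEdges v).val = e₀ ::ₘ ((G.outEdges v).val.erase e₀) :=
    (Multiset.cons_erase he₀mem).symm
  have hsum : G.wtM s hG ((G.outEdges v).val.map G.rng)
      = G.wt s hG (G.rng e₀) +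
        (((G.outEdges v).val.erase e₀).map (fun e => G.wt s hG (G.rng e))).sum := by
    rw [wtM]
    conv_lhs => rw [hsplit]
    rw [Multiset.map_cons, Multiset.map_cons, Multiset.sum_cons, Multiset.map_map]
    rfl
  have hrest : (((G.outEdges v).val.erase e₀).map (fun e => G.wt s hG (G.rng e))).sum
      ≤ ((G.outEdges v).card - 1) * (K ^ (B + 1) - K) := by
    have hcard : Multiset.card (((G.outEdges v).val.erase e₀).map
        (fun e => G.wt s hG (G.rng e))) = (G.outEdges v).card - 1 := by
      rw [Multiset.card_map, Multiset.card_erase_of_mem he₀mem]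
      rfl
    calc (((G.outEdges v).val.erase e₀).map (fun e => G.wt s hG (G.rng e))).sum
        ≤ Multiset.card (((G.outEdges v).val.erase e₀).map
            (fun e => G.wt s hG (G.rng e))) • (K ^ (B + 1) - K) := by
          apply Multiset.sum_le_card_nsmul
          intro x hx
          obtain ⟨e, _, rfl⟩ := Multiset.mem_map.1 hx
          exact G.wt_le s hG (G.rng e)
      _ = ((G.outEdges v).card - 1) * (K ^ (B + 1) - K) := by rw [hcard, smul_eq_mul]
  -- numeric inequality
  have hwtv : G.wt s hG v = K ^ (B + 1) - K ^ m := rfl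
  rw [hsum, hwtv]
  have h1 : K ^ (m + 1) ≤ K ^ (B + 1) := Nat.pow_le_pow_right (G.one_le_bigK) hmB
  have h2 : K ≤ K ^ (B + 1) := by
    calc K = K ^ 1 := (pow_one _).symm
      _ ≤ K ^ (B + 1) := Nat.pow_le_pow_right (G.one_le_bigK) (by omega)
  have h3 : K ^ m ≤ K ^ (B + 1) := Nat.pow_le_pow_right (G.one_le_bigK) (by omega)
  have h4 : 1 ≤ K ^ m := Nat.one_le_pow _ _ (G.one_le_bigK)
  have h5 : K ^ (m + 1) = K ^ m * K := pow_succ _ _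
  set d := (G.outEdges v).card with hd
  -- goal : wt (rng e₀) + rest < d * (K^(B+1) - K^m)
  calc G.wt s hG (G.rng e₀) +
        (((G.outEdges v).val.erase e₀).map (fun e => G.wt s hG (G.rng e))).sum
      ≤ (K ^ (B + 1) - K ^ (m + 1)) + (d - 1) * (K ^ (B + 1) - K) :=
        Nat.add_le_add hwt₀ hrest
    _ < d * (K ^ (B + 1) - K ^ m) := by
        zify [h1, h2, h3, hdeg1]
        have hd1 : (1 : ℤ) ≤ (d : ℤ) := by exact_mod_cast hdeg1
        have hK4 : (1 : ℤ) ≤ (K : ℤ) ^ m := by exact_mod_cast h4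
        have hKd : (d : ℤ) + 1 ≤ (K : ℤ) := by exact_mod_cast hKdeg
        have h5' : ((K : ℤ)) ^ (m + 1) = (K : ℤ) ^ m * K := by push_cast [h5]; ring
        nlinarith [mul_le_mul_of_nonneg_right hKd (le_trans zero_le_one hK4),
          mul_nonneg (sub_nonneg.2 hd1) (by positivity : (0:ℤ) ≤ (K:ℤ))]

/-! ### reduction to bounded representatives -/

lemma spMk_replicate_sink (n : ℕ) : G.spMk s (Multiset.replicate n s) = 0 := by
  induction n with
  | zero => exact G.spMk_zero s
  | succ n ih =>
      rw [Multiset.replicate_succ, show s ::ₘ Multiset.replicate n s =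
        {s} + Multiset.replicate n s from (Multiset.singleton_add _ _).symm,
        G.spMk_add, G.spMk_sink, ih, add_zero]

lemma topple_eq (a : Multiset G.V) {v : G.V} (hv : ¬ G.IsSink v)
    (hc : (G.outEdges v).card ≤ a.count v) :
    G.spMk s a = G.spMk s ((a - Multiset.replicate (G.outEdges v).card v) +
      (G.outEdges v).val.map G.rng) := by
  have hle : Multiset.replicate (G.outEdges v).card v ≤ a :=
    Multiset.le_count_iff_replicate_le.1 hc
  conv_lhs => rw [← tsub_add_cancel_of_le hle]
  rw [G.spMk_add, G.spMk_add, G.spMk_topple s hv]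

lemma topple_wt_lt (hG : G.IsSandpile s) (a : Multiset G.V) {v : G.V} (hv : ¬ G.IsSink v)
    (hc : (G.outEdges v).card ≤ a.count v) :
    G.wtM s hG ((a - Multiset.replicate (G.outEdges v).card v) +
      (G.outEdges v).val.map G.rng) < G.wtM s hG a := by
  have hle : Multiset.replicate (G.outEdges v).card v ≤ a :=
    Multiset.le_count_iff_replicate_le.1 hc
  conv_rhs => rw [← tsub_add_cancel_of_le hle]
  rw [G.wtM_add, G.wtM_add, G.wtM_replicate]
  exact Nat.add_lt_add_left (G.wtM_topple_lt s hG hv) _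

lemma exists_untopplable (hG : G.IsSandpile s) :
    ∀ (n : ℕ) (a : Multiset G.V), G.wtM s hG a ≤ n →
      ∃ b : Multiset G.V, G.spMk s a = G.spMk s b ∧
        ∀ v : G.V, ¬ G.IsSink v → b.count v < (G.outEdges v).card := by
  classical
  intro n
  induction n with
  | zero =>
      intro a ha
      by_cases h : ∃ v : G.V, ¬ G.IsSink v ∧ (G.outEdges v).card ≤ a.count v
      · obtain ⟨v, hv, hc⟩ := h
        have := G.topple_wt_lt s hG a hv hc
        omega
      · push_neg at h
        exact ⟨a, rfl, fun v hv => Nat.lt_of_not_le fun hc => absurd (h v hv) (by omega)⟩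
  | succ n ih =>
      intro a ha
      by_cases h : ∃ v : G.V, ¬ G.IsSink v ∧ (G.outEdges v).card ≤ a.count v
      · obtain ⟨v, hv, hc⟩ := h
        have hlt := G.topple_wt_lt s hG a hv hc
        obtain ⟨b, hb1, hb2⟩ := ih ((a - Multiset.replicate (G.outEdges v).card v) +
          (G.outEdges v).val.map G.rng) (by omega)
        exact ⟨b, (G.topple_eq s a hv hc).trans hb1, hb2⟩
      · push_neg at h
        exact ⟨a, rfl, fun v hv => Nat.lt_of_not_le fun hc => absurd (h v hv) (by omega)⟩

lemma exists_bounded_rep (hG : G.IsSandpile s) (x : G.SP s) :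
    ∃ c : Multiset G.V, x = G.spMk s c ∧ ∀ v : G.V, c.count v ≤ Fintype.card G.E := by
  classical
  obtain ⟨a, rfl⟩ := G.spMk_surjective s x
  obtain ⟨b, hb1, hb2⟩ := G.exists_untopplable s hG (G.wtM s hG a) a le_rfl
  set c := b.filter (fun u => u ≠ s) with hc
  have hbc : G.spMk s b = G.spMk s c := by
    have hsplit : b = c + b.filter (fun u => ¬ u ≠ s) := by
      rw [hc, Multiset.filter_add_not]
    rw [hsplit, G.spMk_add]
    have : b.filter (fun u => ¬ u ≠ s) = Multiset.replicate (b.count s) s := by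
      simp only [not_ne_iff]
      exact Multiset.filter_eq' b s
    rw [this, G.spMk_replicate_sink, add_zero]
  refine ⟨c, hb1.trans hbc, fun v => ?_⟩
  by_cases hvs : v = s
  · subst hvs
    simp [hc, Multiset.count_filter]
  · have hcount : c.count v = b.count v := by
      simp [hc, Multiset.count_filter, hvs]
    have hns : ¬ G.IsSink v := fun h => hvs (hG.2.1 v h)
    have := hb2 v hns
    have hcard : (G.outEdges v).card ≤ Fintype.card G.E := by
      calc (G.outEdges v).card ≤ Finset.univ.card := Finset.card_le_univ _
        _ = Fintype.card G.E := rfl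
    omega

lemma sp_finite (hG : G.IsSandpile s) : Finite (G.SP s) := by
  classical
  set D := Fintype.card G.E with hD
  refine Finite.of_surjective (f := fun g : G.V → Fin (D + 1) =>
    G.spMk s (∑ v : G.V, (g v).val • ({v} : Multiset G.V))) ?_
  intro x
  obtain ⟨c, rfl, hcount⟩ := G.exists_bounded_rep s hG x
  refine ⟨fun v => ⟨c.count v, by have := hcount v; omega⟩, ?_⟩
  show G.spMk s (∑ v : G.V, c.count v • ({v} : Multiset G.V)) = G.spMk s c
  congr 1
  have : ∑ v ∈ c.toFinset, c.count v • ({v} : Multiset G.V) = c :=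
    Multiset.toFinset_sum_count_nsmul_eq c
  conv_rhs => rw [← this]
  symm
  apply Finset.sum_subset (Finset.subset_univ _)
  intro v _ hv
  rw [Multiset.count_eq_zero_of_notMem (by simpa using hv), zero_smul]

/-! ### idempotent multiples in a finite monoid -/

lemma exists_idem_nsmul {M : Type} [AddCommMonoid M] [Finite M] (x : M) :
    ∃ N : ℕ, 1 ≤ N ∧ N • x + N • x = N • x := by
  obtain ⟨i, j, hij, hx⟩ := Finite.exists_ne_map_eq_of_infinite (fun n : ℕ => n • x)
  wlog h : i < j generalizing i j
  · exact this j i hij.symm hx.symm (by omega)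
  set n := i
  set p := j - i with hp
  have hp1 : 1 ≤ p := by omega
  have hkey : ∀ k, n ≤ k → (k + p) • x = k • x := by
    intro k hk
    have hkp : k + p = (k - n) + j := by omega
    have hkn : k = (k - n) + n := by omega
    rw [hkp, add_nsmul, ← hx, ← add_nsmul, ← hkn]
  have hiter : ∀ (t : ℕ) (k : ℕ), n ≤ k → (k + t * p) • x = k • x := by
    intro t
    induction t with
    | zero => simp
    | succ t ih =>
        intro k hk
        have : k + (t + 1) * p = (k + t * p) + p := by ring
        rw [this, hkey _ (by omega), ih k hk]
  refine ⟨(max n 1) * p, Nat.mul_le_mul (Nat.le_max_right n 1) hp1, ?_⟩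
  rw [← add_nsmul]
  have : (max n 1) * p + (max n 1) * p = (max n 1) * p + (max n 1) * p := rfl
  calc ((max n 1) * p + (max n 1) * p) • x
      = ((max n 1) * p + (max n 1) * p) • x := rfl
    _ = ((max n 1) * p) • x := by
        apply hiter (max n 1) ((max n 1) * p)
        calc n ≤ max n 1 := Nat.le_max_left n 1
          _ = (max n 1) * 1 := (Nat.mul_one _).symm
          _ ≤ (max n 1) * p := Nat.mul_le_mul_left _ hp1

/-! ### assembling -/

lemma clq_props (x : G.SP s) :
    (G.clq s x).Nonempty ∧ G.Hereditary (G.clq s x) ∧ G.Saturated (G.clq s x) := by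
  obtain ⟨a, rfl⟩ := G.spMk_surjective s x
  rw [G.clq_spMk]
  exact ⟨⟨s, G.sink_mem_clm s a⟩, G.hsClosure_hereditary _, G.hsClosure_saturated _⟩

lemma clq_mono {x y : G.SP s} (h : cle x y) : G.clq s x ⊆ G.clq s y := by
  obtain ⟨z, rfl⟩ := h
  obtain ⟨a, rfl⟩ := G.spMk_surjective s x
  obtain ⟨c, rfl⟩ := G.spMk_surjective s z
  rw [← G.spMk_add, G.clq_spMk, G.clq_spMk, G.clm_add]
  exact fun v hv => G.subset_hsClosure _ (Finset.mem_union_left _ hv)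

lemma cle_of_clq_subset {x y : G.SP s} (hy : y + y = y) (h : G.clq s x ⊆ G.clq s y) :
    cle x y := by
  obtain ⟨a, rfl⟩ := G.spMk_surjective s x
  obtain ⟨b, hb⟩ := G.spMk_surjective s y
  refine G.cle_sum_of_forall s hy a fun v hv => ?_
  refine G.cle_of_mem_clm s hy hb.symm ?_
  have : v ∈ G.clq s (G.spMk s a) := by
    rw [G.clq_spMk]
    exact G.toFinset_subset_clm s a (Multiset.mem_toFinset.2 hv)
  have := h this
  rwa [← hb, G.clq_spMk] at this

theorem idem_hereditary_orderIso' (hG : G.IsSandpile s) :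
    ∃ ς : {x : G.SP s // x + x = x} →
          {H : Finset G.V // H.Nonempty ∧ G.Hereditary H ∧ G.Saturated H},
      Function.Bijective ς ∧
      (∀ x y : {x : G.SP s // x + x = x}, cle x.1 y.1 ↔ (ς x).1 ⊆ (ς y).1) ∧
      (∀ x : {x : G.SP s // x + x = x}, x.1 = 0 → (ς x).1 = G.sinkSet) ∧
      (∀ x : {x : G.SP s // x + x = x}, ∀ a : Multiset G.V,
        x.1 = G.spMk s a → x.1 ≠ 0 → (ς x).1 = G.hsClosure a.toFinset) := by
  classical
  have hfin : Finite (G.SP s) := G.sp_finite s hG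
  refine ⟨fun x => ⟨G.clq s x.1, G.clq_props s x.1⟩, ⟨?_, ?_⟩, ?_, ?_, ?_⟩
  · -- injective
    intro x y hxy
    have h : G.clq s x.1 = G.clq s y.1 := congrArg Subtype.val hxy
    have h1 : cle x.1 y.1 := G.cle_of_clq_subset s y.2 (h ▸ subset_rfl)
    have h2 : cle y.1 x.1 := G.cle_of_clq_subset s x.2 (h ▸ subset_rfl)
    have e1 : x.1 + y.1 = y.1 := idem_add_of_cle x.2 h1
    have e2 : y.1 + x.1 = x.1 := idem_add_of_cle y.2 h2
    exact Subtype.ext (by rw [← e2, add_comm, e1])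
  · -- surjective
    rintro ⟨H, hne, hher, hsat⟩
    set a : Multiset G.V := H.val with ha
    obtain ⟨N, hN1, hidem⟩ := exists_idem_nsmul (G.spMk s a)
    have he : N • G.spMk s a = G.spMk s (N • a) := (G.spMk_nsmul s N a).symm
    refine ⟨⟨N • G.spMk s a, hidem⟩, Subtype.ext ?_⟩
    show G.clq s (N • G.spMk s a) = H
    rw [he, G.clq_spMk]
    unfold clm
    rw [Multiset.toFinset_nsmul a N (by omega), ha, Finset.val_toFinset,
      Finset.insert_eq_self.2 (G.sink_mem_of_sathered s hG hne hher)]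
    exact G.hsClosure_of_sathered hher hsat
  · -- order iso
    intro x y
    constructor
    · exact fun h => G.clq_mono s h
    · exact fun h => G.cle_of_clq_subset s y.2 h
  · -- value at 0
    intro x hx
    show G.clq s x.1 = G.sinkSet
    rw [hx, show (0 : G.SP s) = G.spMk s 0 from (G.spMk_zero s).symm, G.clq_spMk]
    unfold clm
    rw [Multiset.toFinset_zero, Finset.insert_empty]
    exact G.hsClosure_singleton_sink s hG
  · -- value elsewhere
    intro x a hxa hx0
    show G.clq s x.1 = G.hsClosure a.toFinset
    rw [hxa, G.clq_spMk]
    unfold clm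
    have hane : a ≠ 0 := by
      rintro rfl
      exact hx0 (by rw [hxa, G.spMk_zero])
    have hsmem : s ∈ G.hsClosure a.toFinset := by
      obtain ⟨v, hv⟩ := Multiset.exists_mem_of_ne_zero hane
      exact G.mem_of_reaches (G.hsClosure_hereditary _)
        (G.subset_hsClosure _ (Multiset.mem_toFinset.2 hv)) (hG.2.2 v)
    apply le_antisymm
    · apply G.hsClosure_min (G.hsClosure_hereditary _) (G.hsClosure_saturated _)
      intro u hu
      rcases Finset.mem_insert.1 hu with h' | h'
      · exact h' ▸ hsmem
      · exact G.subset_hsClosure _ h'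
    · exact G.hsClosure_mono (Finset.subset_insert _ _)

end DGraph

/-- The map `ς_E` sending the idempotent `0` to `S_E` and a nonzero
idempotent `x` to the hereditary saturated closure of the support of any representative
of `x` is well defined and an order isomorphism `Idem(SP(E)) ≅ 𝓗_E`. -/
theorem idem_hereditary_orderIso (G : DGraph) (s : G.V) (hG : G.IsSandpile s) :
    ∃ ς : {x : G.SP s // x + x = x} →
          {H : Finset G.V // H.Nonempty ∧ G.Hereditary H ∧ G.Saturated H},
      Function.Bijective ς ∧
      (∀ x y : {x : G.SP s // x + x = x}, cle x.1 y.1 ↔ (ς x).1 ⊆ (ς y).1) ∧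
      (∀ x : {x : G.SP s // x + x = x}, x.1 = 0 → (ς x).1 = G.sinkSet) ∧
      (∀ x : {x : G.SP s // x + x = x}, ∀ a : Multiset G.V,
        x.1 = G.spMk s a → x.1 ≠ 0 → (ς x).1 = G.hsClosure a.toFinset) := by
  exact G.idem_hereditary_orderIso' s hG
end

section
/- Let E be a sandpile graph and x ∈ SP(E). Then the archimedean class [x] is closed under addition (a subsemigroup of SP(E)) and contains exactly one idempotent of SP(E). -/
/-! ### Auxiliary lemmas: general commutative monoids -/

section GeneralMonoid

variable {M : Type} [AddCommMonoid M]

lemma cle_trans {a b c : M} (h1 : cle a b) (h2 : cle b c) : cle a c := by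
  obtain ⟨z1, rfl⟩ := h1; obtain ⟨z2, rfl⟩ := h2; exact ⟨z1 + z2, by abel⟩

lemma cle_smul {a b : M} (n : ℕ) (h : cle a b) : cle (n • a) (n • b) := by
  obtain ⟨z, rfl⟩ := h; exact ⟨n • z, by rw [smul_add]⟩

lemma idem_nsmul_add {e : M} (he : e + e = e) : ∀ n : ℕ, n • e + e = e := by
  intro n
  induction n with
  | zero => rw [zero_nsmul, zero_add]
  | succ k ih => rw [succ_nsmul, add_assoc, he, ih]

lemma absorb_of_cle {e f : M} (he : e + e = e) (hf : f + f = f)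
    (h1 : ∃ m : ℕ, cle e (m • f)) : e + f = f := by
  obtain ⟨m, z, hz⟩ := h1
  have h2 : m • f + f = f := idem_nsmul_add hf m
  have h3 : f = e + (z + f) := by rw [← add_assoc, ← hz, h2]
  calc e + f = e + (e + (z + f)) := by rw [← h3]
    _ = (e + e) + (z + f) := by rw [← add_assoc]
    _ = e + (z + f) := by rw [he]
    _ = f := h3.symm

lemma idem_eq {e f : M} (he : e + e = e) (hf : f + f = f)
    (h : archRel e f) : e = f := by
  have h1 : e + f = f := absorb_of_cle he hf h.1
  have h2 : f + e = e := absorb_of_cle hf he h.2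
  calc e = f + e := h2.symm
    _ = e + f := by abel
    _ = f := h1

lemma archRel_of_of {x e f : M} (h1 : archRel x e) (h2 : archRel x f) : archRel e f := by
  obtain ⟨⟨m1, hm1⟩, ⟨n1, hn1⟩⟩ := h1
  obtain ⟨⟨m2, hm2⟩, ⟨n2, hn2⟩⟩ := h2
  constructor
  · refine ⟨n1 * m2, cle_trans hn1 ?_⟩
    rw [← smul_smul]; exact cle_smul n1 hm2
  · refine ⟨n2 * m1, cle_trans hn2 ?_⟩
    rw [← smul_smul]; exact cle_smul n2 hm1

lemma exists_idem_of_period {x : M} {i p : ℕ} (hi : 1 ≤ i) (hp : 1 ≤ p)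
    (hper : i • x = (i + p) • x) : ∃ e : M, archRel x e ∧ e + e = e := by
  have key0 : ∀ t : ℕ, i • x = (i + t * p) • x := by
    intro t
    induction t with
    | zero => simp
    | succ k ih =>
      have : i + (k + 1) * p = (i + k * p) + p := by ring
      rw [this, add_nsmul, ← ih, ← add_nsmul, hper]
  have key : ∀ m : ℕ, i ≤ m → ∀ t : ℕ, m • x = (m + t * p) • x := by
    intro m hm t
    have hm' : m = (m - i) + i := by omega
    have hm'' : m + t * p = (m - i) + (i + t * p) := by omega
    rw [hm'', add_nsmul, ← key0 t, ← add_nsmul, ← hm']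
  have hip : 1 ≤ i * p := Nat.mul_le_mul hi hp
  have split1 : ∀ q : ℕ, 1 ≤ q → q • x = x + (q - 1) • x := by
    intro q hq
    obtain ⟨r, rfl⟩ : ∃ r, q = r + 1 := ⟨q - 1, by omega⟩
    simp [succ_nsmul, add_comm]
  refine ⟨(i * p) • x, ⟨⟨1, ?_⟩, ⟨i * p, 0, by simp⟩⟩, ?_⟩
  · exact ⟨(i * p - 1) • x, by rw [one_nsmul, split1 _ hip]⟩
  · rw [← add_nsmul]
    have := key (i * p) (Nat.le_mul_of_pos_right i hp) i
    rw [← this]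

lemma exists_idem' [Finite M] (x : M) : ∃ e : M, archRel x e ∧ e + e = e := by
  obtain ⟨a, b, hne, heq⟩ := Finite.exists_ne_map_eq_of_infinite (fun n : ℕ => (n + 1) • x)
  rcases hne.lt_or_gt with hab | hab
  · refine exists_idem_of_period (i := a + 1) (p := b - a) (by omega) (by omega) ?_
    have : a + 1 + (b - a) = b + 1 := by omega
    rw [this]; exact heq
  · refine exists_idem_of_period (i := b + 1) (p := a - b) (by omega) (by omega) ?_
    have : b + 1 + (a - b) = a + 1 := by omega
    rw [this]; exact heq.symm

end GeneralMonoid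

/-! ### Auxiliary lemmas: finiteness of the sandpile monoid -/

namespace SPAux

open DGraph

variable (G : DGraph) (s : G.V)

/-- Paths of a given length. -/
def PathLen (G : DGraph) : ℕ → G.V → G.V → Prop
  | 0, u, v => u = v
  | n+1, u, v => ∃ w, G.Step u w ∧ PathLen G n w v

lemma pathLen_tail {v : G.V} :
    ∀ (n : ℕ) (u w : G.V), PathLen G n u w → G.Step w v → PathLen G (n + 1) u v := by
  intro n
  induction n with
  | zero =>
    intro u w h hs
    exact ⟨v, h ▸ hs, rfl⟩
  | succ k ih =>
    intro u w h hs
    obtain ⟨w', hstep, hp⟩ := h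
    exact ⟨w', hstep, ih _ _ hp hs⟩

lemma reaches_pathLen {u v : G.V} (h : G.Reaches u v) : ∃ n, PathLen G n u v := by
  induction h with
  | refl => exact ⟨0, rfl⟩
  | tail _ hbc ih =>
    obtain ⟨n, hn⟩ := ih
    exact ⟨n + 1, pathLen_tail G n _ _ hn hbc⟩

open Classical in
/-- Distance to the sink. -/
noncomputable def distTo (v : G.V) : ℕ :=
  if h : ∃ n, PathLen G n v s then Nat.find h else 0

open Classical in
lemma distTo_spec {v : G.V} (h : ∃ n, PathLen G n v s) :
    PathLen G (distTo G s v) v s := by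
  rw [distTo, dif_pos h]
  exact Nat.find_spec h

open Classical in
lemma distTo_le {v : G.V} {n : ℕ} (hp : PathLen G n v s) : distTo G s v ≤ n := by
  rw [distTo, dif_pos ⟨n, hp⟩]
  exact Nat.find_le hp

/-- The base of the weight function. -/
def bigM : ℕ := Fintype.card G.E + 1

noncomputable def bigD : ℕ := Finset.univ.sup (distTo G s)

lemma distTo_le_bigD (v : G.V) : distTo G s v ≤ bigD G s :=
  Finset.le_sup (Finset.mem_univ v)

/-- The vertex weight. -/
noncomputable def psi (v : G.V) : ℕ :=
  bigM G ^ bigD G s - bigM G ^ (bigD G s - distTo G s v)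

lemma one_le_bigM : 1 ≤ bigM G := by simp [bigM]

lemma psi_le (v : G.V) : psi G s v ≤ bigM G ^ bigD G s - 1 :=
  Nat.sub_le_sub_left (Nat.one_le_pow _ _ (by simp [bigM])) _

lemma exists_good_edge (hG : G.IsSandpile s) (v : G.V) (hv : ¬ G.IsSink v) :
    1 ≤ distTo G s v ∧
      ∃ e : G.E, G.src e = v ∧ distTo G s (G.rng e) + 1 ≤ distTo G s v := by
  have hex : ∃ n, PathLen G n v s := reaches_pathLen G (hG.2.2 v)
  have hp := distTo_spec G s hex
  have hvs : v ≠ s := fun h => hv (h ▸ hG.1)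
  rcases hk : distTo G s v with _ | k
  · rw [hk] at hp
    exact absurd hp hvs
  · rw [hk] at hp
    obtain ⟨w, ⟨e, he1, he2⟩, hpw⟩ := hp
    have : distTo G s w ≤ k := distTo_le G s hpw
    exact ⟨by omega, e, he1, by rw [he2]; omega⟩

/-- Weight of a configuration. -/
noncomputable def wt (a : Multiset G.V) : ℕ := (a.map (psi G s)).sum

/-- The termination measure. -/
noncomputable def mu (a : Multiset G.V) : ℕ := Multiset.card a + wt G s a

lemma wt_add (a b : Multiset G.V) : wt G s (a + b) = wt G s a + wt G s b := by
  simp [wt]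

lemma mu_add (a b : Multiset G.V) : mu G s (a + b) = mu G s a + mu G s b := by
  unfold mu
  rw [Multiset.card_add, wt_add]
  ring

lemma wt_replicate (n : ℕ) (v : G.V) :
    wt G s (Multiset.replicate n v) = n * psi G s v := by
  simp [wt, Multiset.map_replicate, Multiset.sum_replicate, smul_eq_mul]

lemma card_outEdges_pos {v : G.V} (hv : ¬ G.IsSink v) : 0 < (G.outEdges v).card := by
  rw [Finset.card_pos]
  simp only [IsSink, not_forall, not_not] at hv
  obtain ⟨e, he⟩ := hv
  exact ⟨e, by simp [outEdges, he]⟩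

lemma card_outEdges_lt_bigM (v : G.V) : (G.outEdges v).card < bigM G := by
  have := Finset.card_filter_le (Finset.univ : Finset G.E) (fun e => G.src e = v)
  simp only [outEdges, bigM]
  have h2 : (Finset.univ : Finset G.E).card = Fintype.card G.E := Finset.card_univ
  omega

lemma topple_wt_lt (hG : G.IsSandpile s) (v : G.V) (hv : ¬ G.IsSink v) :
    wt G s ((G.outEdges v).val.map G.rng) + 1 ≤ (G.outEdges v).card * psi G s v := by
  obtain ⟨hk1, e0, he0, hd⟩ := exists_good_edge G s hG v hv
  have he0mem : e0 ∈ G.outEdges v := by simp [outEdges, he0]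
  have hwt : wt G s ((G.outEdges v).val.map G.rng)
      = ∑ e ∈ G.outEdges v, psi G s (G.rng e) := by
    rw [wt, Multiset.map_map, Finset.sum_eq_multiset_sum]
    rfl
  set A := bigM G ^ bigD G s with hA
  set k := distTo G s v with hk
  set d := (G.outEdges v).card with hdd
  set T := bigM G ^ (bigD G s - k) with hT
  have hkD : k ≤ bigD G s := distTo_le_bigD G s v
  have hMpos : 1 ≤ bigM G := one_le_bigM G
  -- bound for the good edge
  have h1 : psi G s (G.rng e0) ≤ A - T * bigM G := by
    have hj : bigD G s - k + 1 ≤ bigD G s - distTo G s (G.rng e0) := by omega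
    have hpow : T * bigM G ≤ bigM G ^ (bigD G s - distTo G s (G.rng e0)) := by
      rw [hT, ← pow_succ]
      exact Nat.pow_le_pow_right hMpos hj
    exact le_trans (Nat.sub_le_sub_left hpow _) (le_refl _)
  -- bound for the other edges
  have h2 : ∑ e ∈ (G.outEdges v).erase e0, psi G s (G.rng e) ≤ (d - 1) * (A - 1) := by
    have := Finset.sum_le_card_nsmul ((G.outEdges v).erase e0) (fun e => psi G s (G.rng e))
      (A - 1) (fun e _ => psi_le G s (G.rng e))
    rwa [Finset.card_erase_of_mem he0mem, smul_eq_mul] at this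
  rw [hwt, ← Finset.add_sum_erase _ _ he0mem]
  have hpsiv : psi G s v = A - T := rfl
  have hTA : T * bigM G ≤ A := by
    rw [hT, hA, ← pow_succ]
    exact Nat.pow_le_pow_right hMpos (by omega)
  have hT1 : 1 ≤ T := Nat.one_le_pow _ _ (by omega)
  have hTA' : T ≤ A := Nat.pow_le_pow_right hMpos (by omega)
  have hd1 : 1 ≤ d := card_outEdges_pos G hv
  have hdM : d + 1 ≤ bigM G := card_outEdges_lt_bigM G v
  have hA1 : 1 ≤ A := Nat.one_le_pow _ _ (by omega)
  have harith : (A - T * bigM G) + (d - 1) * (A - 1) + 1 ≤ d * (A - T) := by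
    zify [hTA, hT1, hTA', hd1, hA1]
    nlinarith [mul_le_mul_of_nonneg_left (show (d : ℤ) + 1 ≤ (bigM G : ℤ) by exact_mod_cast hdM)
      (show (0 : ℤ) ≤ (T : ℤ) by positivity)]
  rw [hpsiv]
  omega

lemma step1_mu_lt (hG : G.IsSandpile s) {a b : Multiset G.V} (h : G.step1 s a b) :
    mu G s b < mu G s a := by
  rcases h with ⟨hs, rfl⟩ | ⟨v, hv, hc, rfl⟩
  · -- sink removal
    have hle : a.filter (fun v => v ≠ s) ≤ a := Multiset.filter_le _ a
    have hsb : s ∉ a.filter (fun v => v ≠ s) := by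
      intro hmem
      exact (Multiset.of_mem_filter hmem) rfl
    have hlt : a.filter (fun v => v ≠ s) < a :=
      lt_of_le_of_ne hle (fun h => hsb (by rw [h]; exact hs))
    have hcard := Multiset.card_lt_card hlt
    have hwt : wt G s (a.filter fun v => v ≠ s) ≤ wt G s a := by
      obtain ⟨c, hc⟩ := Multiset.le_iff_exists_add.1 hle
      have h2 : wt G s a = wt G s (a.filter (fun v => v ≠ s)) + wt G s c := by
        rw [← wt_add, ← hc]
      omega
    unfold mu
    omega
  · -- toppling
    have hrep : Multiset.replicate (G.outEdges v).card v ≤ a :=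
      Multiset.le_count_iff_replicate_le.1 hc
    have ha : a - Multiset.replicate (G.outEdges v).card v
        + Multiset.replicate (G.outEdges v).card v = a := tsub_add_cancel_of_le hrep
    have hmu_map : mu G s ((G.outEdges v).val.map G.rng)
        < mu G s (Multiset.replicate (G.outEdges v).card v) := by
      have h1 := topple_wt_lt G s hG v hv
      simp only [mu, wt_replicate, Multiset.card_map, Multiset.card_replicate]
      have : Multiset.card (G.outEdges v).val = (G.outEdges v).card := rfl
      omega
    calc mu G s (a - Multiset.replicate (G.outEdges v).card v + (G.outEdges v).val.map G.rng)
        = mu G s (a - Multiset.replicate (G.outEdges v).card v)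
          + mu G s ((G.outEdges v).val.map G.rng) := mu_add G s _ _
      _ < mu G s (a - Multiset.replicate (G.outEdges v).card v)
          + mu G s (Multiset.replicate (G.outEdges v).card v) := by omega
      _ = mu G s (a - Multiset.replicate (G.outEdges v).card v
          + Multiset.replicate (G.outEdges v).card v) := (mu_add G s _ _).symm
      _ = mu G s a := by rw [ha]

/-- Stable configurations. -/
def Stab (b : Multiset G.V) : Prop :=
  s ∉ b ∧ ∀ v, ¬ G.IsSink v → b.count v < (G.outEdges v).card

lemma exists_stab (hG : G.IsSandpile s) :
    ∀ (n : ℕ) (a : Multiset G.V), mu G s a < n →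
      ∃ b, G.Transforms s a b ∧ Stab G s b := by
  intro n
  induction n with
  | zero => intro a h; omega
  | succ n ih =>
    intro a ha
    by_cases h1 : s ∈ a
    · have hstep : G.step1 s a (a.filter fun v => v ≠ s) := Or.inl ⟨h1, rfl⟩
      obtain ⟨b, hb, hstab⟩ := ih (a.filter fun v => v ≠ s)
        (by have := step1_mu_lt G s hG hstep; omega)
      exact ⟨b, Relation.ReflTransGen.head hstep hb, hstab⟩
    · by_cases h2 : ∃ v, ¬ G.IsSink v ∧ (G.outEdges v).card ≤ a.count v
      · obtain ⟨v, hv, hc⟩ := h2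
        have hstep : G.step1 s a
            ((a - Multiset.replicate (G.outEdges v).card v) + (G.outEdges v).val.map G.rng) :=
          Or.inr ⟨v, hv, hc, rfl⟩
        obtain ⟨b, hb, hstab⟩ := ih
          ((a - Multiset.replicate (G.outEdges v).card v) + (G.outEdges v).val.map G.rng)
          (by have := step1_mu_lt G s hG hstep; omega)
        exact ⟨b, Relation.ReflTransGen.head hstep hb, hstab⟩
      · push_neg at h2
        exact ⟨a, Relation.ReflTransGen.refl, h1, h2⟩

lemma spCon_singleton : G.spCon s {s} 0 :=
  AddConGen.Rel.of _ _ (Or.inl ⟨rfl, rfl⟩)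

lemma spCon_rep_sink (n : ℕ) : G.spCon s (Multiset.replicate n s) 0 := by
  induction n with
  | zero => exact (G.spCon s).refl 0
  | succ k ih =>
    have hrw : Multiset.replicate (k + 1) s = {s} + Multiset.replicate k s := by
      rw [Multiset.replicate_succ, ← Multiset.singleton_add]
    rw [hrw]
    have := (G.spCon s).add (spCon_singleton G s) ih
    rwa [add_zero] at this

lemma step1_spCon {a b : Multiset G.V} (h : G.step1 s a b) : G.spCon s a b := by
  rcases h with ⟨hs, rfl⟩ | ⟨v, hv, hc, rfl⟩
  · have key : Multiset.filter (· = s) a = Multiset.replicate (a.count s) s :=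
      Multiset.filter_eq' a s
    have hsplit : Multiset.replicate (a.count s) s + a.filter (fun v => v ≠ s) = a := by
      rw [← key]
      simpa [ne_eq] using Multiset.filter_add_not (fun u => u = s) a
    have h2 := (G.spCon s).add (spCon_rep_sink G s (a.count s))
      ((G.spCon s).refl (a.filter fun v => v ≠ s))
    rw [zero_add, hsplit] at h2
    exact h2
  · have hrep : Multiset.replicate (G.outEdges v).card v ≤ a :=
      Multiset.le_count_iff_replicate_le.1 hc
    have h2 := (G.spCon s).add
      ((G.spCon s).refl (a - Multiset.replicate (G.outEdges v).card v))
      (AddConGen.Rel.of _ _ (Or.inr ⟨v, hv, rfl, rfl⟩) :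
        G.spCon s (Multiset.replicate (G.outEdges v).card v) ((G.outEdges v).val.map G.rng))
    rwa [tsub_add_cancel_of_le hrep] at h2

lemma transforms_spMk {a b : Multiset G.V} (h : G.Transforms s a b) :
    G.spMk s a = G.spMk s b := by
  induction h with
  | refl => rfl
  | tail _ hbc ih =>
    rw [ih]
    exact (AddCon.eq _).2 (step1_spCon G s hbc)

lemma sp_finite (hG : G.IsSandpile s) : Finite (G.SP s) := by
  classical
  set N := Fintype.card G.E + 1 with hN
  have hsurj : Function.Surjective (fun c : G.V → Fin N =>
      G.spMk s (Finset.univ.sum fun v => Multiset.replicate (c v).1 v)) := by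
    intro x
    obtain ⟨a, rfl⟩ := AddCon.mk'_surjective x
    obtain ⟨b, htr, hb1, hb2⟩ := exists_stab G s hG (mu G s a + 1) a (by omega)
    have hx : G.spMk s a = G.spMk s b := transforms_spMk G s htr
    have hcount : ∀ v, b.count v < N := by
      intro v
      by_cases hv : G.IsSink v
      · have hvs : v = s := hG.2.1 v hv
        subst hvs
        have : b.count v = 0 := Multiset.count_eq_zero.2 hb1
        omega
      · have h1 := hb2 v hv
        have h2 : (G.outEdges v).card < N := card_outEdges_lt_bigM G v
        omega
    refine ⟨fun v => ⟨b.count v, hcount v⟩, ?_⟩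
    have hsum : (Finset.univ.sum fun v => Multiset.replicate (b.count v) v) = b := by
      ext u
      rw [Multiset.count_sum']
      rw [Finset.sum_eq_single u]
      · simp [Multiset.count_replicate]
      · intro v _ hvu
        rw [Multiset.count_replicate, if_neg hvu]
      · simp
    show G.spMk s (Finset.univ.sum fun v => Multiset.replicate (b.count v) v) = G.spMk s a
    rw [hsum]
    exact hx.symm
  exact Finite.of_surjective _ hsurj

end SPAux

/-- Each archimedean class of `SP(E)` is closed under addition and
contains exactly one idempotent. -/
theorem archClass_subsemigroup_unique_idem (G : DGraph) (s : G.V) (hG : G.IsSandpile s)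
    (x : G.SP s) :
    (∀ a b : G.SP s, archRel x a → archRel x b → archRel x (a + b)) ∧
    (∃! e : G.SP s, archRel x e ∧ e + e = e) := by
  haveI : Finite (G.SP s) := SPAux.sp_finite G s hG
  constructor
  · rintro a b ⟨⟨ma, za, hza⟩, ⟨na, wa, hwa⟩⟩ ⟨⟨mb, zb, hzb⟩, ⟨nb, wb, hwb⟩⟩
    constructor
    · refine ⟨ma, za + ma • b, ?_⟩
      rw [nsmul_add, hza]
      abel
    · refine ⟨na + nb, wa + wb, ?_⟩
      rw [add_nsmul, hwa, hwb]
      abel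
  · obtain ⟨e, harch, hidem⟩ := exists_idem' x
    refine ⟨e, ⟨harch, hidem⟩, ?_⟩
    rintro f ⟨hf, hfidem⟩
    exact idem_eq hfidem hidem (archRel_of_of hf harch)
end

section
/- Let E be a sandpile graph. The set of maximal subgroups of SP(E) equals {x + [x] : x an idempotent of SP(E)}: every maximal subgroup of SP(E) is of the form x + [x] for some idempotent x, and conversely x + [x] is a maximal subgroup of SP(E) for every idempotent x. Here a maximal subgroup of SP(E) is a subsemigroup of SP(E) that is a group under the induced addition and is maximal under inclusion among such subsemigroups. -/
section AuxMax

variable {M : Type} [AddCommMonoid M]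

/-- The classical maximal subgroup at an idempotent. -/
def HeSet (e : M) : Set M := {x | e + x = x ∧ ∃ y, x + y = e}

lemma idem_add_nsmul {e : M} (he : e + e = e) (n : ℕ) : e + n • e = e := by
  induction n with
  | zero => simp
  | succ n ih => rw [succ_nsmul, ← add_assoc, ih, he]

lemma arch_eq_He {e : M} (he : e + e = e) :
    {y : M | ∃ t, archRel e t ∧ y = e + t} = HeSet e := by
  ext x
  constructor
  · rintro ⟨t, ⟨⟨m, hm⟩, ⟨n, z, hz⟩⟩, rfl⟩
    refine ⟨by rw [← add_assoc, he], ⟨z, ?_⟩⟩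
    calc e + t + z = e + (t + z) := by rw [add_assoc]
      _ = e + n • e := by rw [← hz]
      _ = e := idem_add_nsmul he n
  · rintro ⟨hex, y, hy⟩
    exact ⟨x, ⟨⟨1, x, by rw [one_nsmul, hex]⟩, ⟨1, y, by rw [one_nsmul, hy]⟩⟩, hex.symm⟩

lemma He_subgroup {e : M} (he : e + e = e) : IsSubgroupSet (HeSet e) := by
  refine ⟨⟨e, he, e, he⟩, ?_, e, ⟨he, e, he⟩, fun x hx => hx.1, ?_⟩
  · rintro x ⟨hex, y, hy⟩ x' ⟨hex', y', hy'⟩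
    refine ⟨by rw [← add_assoc, hex], ⟨y + y', ?_⟩⟩
    calc x + x' + (y + y') = (x + y) + (x' + y') := by abel
      _ = e + e := by rw [hy, hy']
      _ = e := he
  · rintro x ⟨hex, y, hy⟩
    refine ⟨e + y, ⟨by rw [← add_assoc, he], x, ?_⟩, ?_⟩
    · calc e + y + x = e + (x + y) := by abel
        _ = e := by rw [hy, he]
    · calc x + (e + y) = e + (x + y) := by abel
        _ = e := by rw [hy, he]

lemma He_maximal {e : M} (he : e + e = e) : IsMaximalSubgroup (HeSet e) := by
  refine ⟨He_subgroup he, ?_⟩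
  rintro T ⟨hTne, hTcl, f, hfT, hfid, hfinv⟩ hST
  have heT : e ∈ T := hST ⟨he, e, he⟩
  obtain ⟨y, hyT, hy⟩ := hfinv e heT
  have hfe : f = e := by
    have h1 : e + f = f := by rw [← hy, ← add_assoc, he]
    have h2 : f + e = e := hfid e heT
    rw [← h1, add_comm, h2]
  refine Set.Subset.antisymm hST (fun x hxT => ?_)
  obtain ⟨w, hwT, hw⟩ := hfinv x hxT
  exact ⟨by rw [← hfe]; exact hfid x hxT, w, by rw [hw, hfe]⟩

end AuxMax

/-- The maximal subgroups of `SP(E)` are exactly the sets `x + [x]`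
for idempotents `x` of `SP(E)`. -/
theorem maximal_subgroups_classification (G : DGraph) (s : G.V) (hG : G.IsSandpile s) :
    ∀ S : Set (G.SP s), IsMaximalSubgroup S ↔
      ∃ x : G.SP s, x + x = x ∧ S = {y : G.SP s | ∃ t, archRel x t ∧ y = x + t} := by

  intro S
  constructor
  · rintro ⟨⟨hne, hcl, e, heS, hid, hinv⟩, hmax⟩
    have he : e + e = e := hid e heS
    refine ⟨e, he, ?_⟩
    have hsub : S ⊆ HeSet e := by
      rintro x hxS
      obtain ⟨y, hyS, hy⟩ := hinv x hxS
      exact ⟨hid x hxS, y, hy⟩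
    have := hmax (HeSet e) (He_subgroup he) hsub
    rw [this, arch_eq_He he]
  · rintro ⟨x, hx, rfl⟩
    rw [arch_eq_He hx]
    exact He_maximal hx
end
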